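/- arXiv:0809.4061 — 3 statements merged into one kernel-verified Lean document; each statement's English description precedes it below -/
import Mathlib

section
/- Let $G$ be a profinite group and let $M$ be a $p$-divisible $G$-module whose $p^n$-torsion subgroups $M[p^n]$ are all finite, and let $T = \varprojlim_n M[p^n]$ be its Tate module. Then $M^{G}[p^\infty]$ is finite if and only if $T^{G} = 0$. -/
/-- A decreasing chain of nonempty finite sets has nonempty intersection. -/
lemma chain_ne {M : Type*} (S : ℕ → Set M) (hfin : ∀ n, (S n).Finite)
    (hne : ∀ n, (S n).Nonempty) (hmono : ∀ n, S (n + 1) ⊆ S n) :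
    (⋂ n, S n).Nonempty := by
  have hanti : ∀ {a b : ℕ}, a ≤ b → S b ⊆ S a := by
    intro a b h
    induction h with
    | refl => exact subset_rfl
    | step _ ih => exact (hmono _).trans ih
  set c : ℕ → ℕ := fun n => (hfin n).toFinset.card with hc
  have hrange : (Set.range c).Nonempty := ⟨c 0, 0, rfl⟩
  obtain ⟨n0, hn0⟩ := Nat.sInf_mem hrange
  have hmin : ∀ m, c n0 ≤ c m := fun m => hn0 ▸ Nat.sInf_le ⟨m, rfl⟩
  obtain ⟨x, hx⟩ := hne n0
  refine ⟨x, Set.mem_iInter.2 fun n => ?_⟩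
  rcases le_total n n0 with h | h
  · exact hanti h hx
  · have hsub : (hfin n).toFinset ⊆ (hfin n0).toFinset := by
      intro y hy
      simp only [Set.Finite.mem_toFinset] at hy ⊢
      exact hanti h hy
    have : (hfin n).toFinset = (hfin n0).toFinset :=
      Finset.eq_of_subset_of_card_le hsub (hmin n)
    have : S n = S n0 := by
      rw [← (hfin n).coe_toFinset, ← (hfin n0).coe_toFinset, this]
    exact this ▸ hx

lemma kill_of_fix {M : Type*} [AddCommGroup M] {p d N : ℕ} {x : M} (hd : 1 ≤ d)
    (hx : x = p ^ d • x) (hN : p ^ N • x = 0) : x = 0 := by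
  have h : ∀ j, x = p ^ (d * j) • x := by
    intro j
    induction j with
    | zero => simp
    | succ j ih =>
      calc x = p ^ d • x := hx
        _ = p ^ d • (p ^ (d * j) • x) := by rw [← ih]
        _ = p ^ (d * j + d) • x := by rw [smul_smul, ← pow_add, add_comm]
        _ = p ^ (d * (j + 1)) • x := by rw [show d * j + d = d * (j + 1) by ring]
  have hNd : N ≤ d * N := Nat.le_mul_of_pos_left N hd
  have := h N
  rw [show d * N = (d * N - N) + N from (Nat.sub_add_cancel hNd).symm,
    pow_add, mul_smul, hN, smul_zero] at this
  exact this

/-- Abstract form of: `A(L)[p^∞]` is finite iff `T_p(A)^{G_L} = 0`.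
`M` is an abelian group with a `G`-action, with all `p^n`-torsion subgroups finite
and `p`-divisible torsion; the Tate module is encoded as compatible sequences. -/
theorem stmt_0 (p : ℕ) (hp : p.Prime) (G M : Type*) [Group G] [AddCommGroup M]
    [DistribMulAction G M]
    (hfin : ∀ n : ℕ, {x : M | p ^ n • x = 0}.Finite)
    (hdiv : ∀ n : ℕ, ∀ x : M, p ^ n • x = 0 → ∃ y : M, p ^ (n + 1) • y = 0 ∧ p • y = x) :
    {x : M | (∃ n : ℕ, p ^ n • x = 0) ∧ ∀ g : G, g • x = x}.Finite ↔
      ∀ f : ℕ → M, (∀ n, p ^ n • f n = 0) → (∀ n, p • f (n + 1) = f n) →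
        (∀ (g : G) (n : ℕ), g • f n = f n) → ∀ n, f n = 0 := by
  classical
  constructor
  · -- finiteness ⇒ fixed Tate module is zero
    intro hS f hf1 hf2 hf3
    by_contra h
    push_neg at h
    obtain ⟨m, hm⟩ := h
    have key : ∀ n k, f n = p ^ k • f (n + k) := by
      intro n k
      induction k with
      | zero => simp
      | succ k ih =>
        calc f n = p ^ k • f (n + k) := ih
          _ = p ^ k • (p • f (n + k + 1)) := by rw [hf2]
          _ = p ^ (k + 1) • f (n + k + 1) := by rw [smul_smul, ← pow_succ]
          _ = p ^ (k + 1) • f (n + (k + 1)) := rfl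
    have main : ∀ k1 k2, k1 < k2 → f (m + k1) ≠ f (m + k2) := by
      intro k1 k2 hlt heq
      have hd : f (m + k1) = p ^ (k2 - k1) • f (m + k1) := by
        have h2 := key (m + k1) (k2 - k1)
        rw [show m + k1 + (k2 - k1) = m + k2 by omega, ← heq] at h2
        exact h2
      have h0 : f (m + k1) = 0 := kill_of_fix (by omega) hd (hf1 (m + k1))
      exact hm (by rw [key m k1, h0, smul_zero])
    have hinj : Function.Injective fun k => f (m + k) := by
      intro a b hab
      rcases lt_trichotomy a b with h | h | h
      · exact absurd hab (main a b h)
      · exact h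
      · exact absurd hab.symm (main b a h)
    have hmem : ∀ k : ℕ, f (m + k) ∈
        {x : M | (∃ n : ℕ, p ^ n • x = 0) ∧ ∀ g : G, g • x = x} :=
      fun k => ⟨⟨m + k, hf1 _⟩, fun g => hf3 g _⟩
    exact (Set.infinite_of_injective_forall_mem hinj hmem) hS
  · -- fixed Tate module zero ⇒ finiteness
    intro hT
    by_contra hS
    set K : ℕ → Set M := fun n => {x | p ^ n • x = 0 ∧ ∀ g : G, g • x = x} with hK
    have hKfin : ∀ n, (K n).Finite := fun n => (hfin n).subset (fun x hx => hx.1)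
    -- orders are unbounded among fixed torsion elements
    have hub : ∀ k, ∃ x : M, (∃ n, p ^ n • x = 0) ∧ (∀ g : G, g • x = x) ∧ p ^ k • x ≠ 0 := by
      intro k
      by_contra hc
      push_neg at hc
      refine hS ((hfin k).subset fun x hx => ?_)
      exact hc x hx.1 hx.2
    set Sn : ℕ → ℕ → Set M := fun n k => (fun x => p ^ k • x) '' K (n + k) with hSn
    have hSnK : ∀ n k, Sn n k ⊆ K n := by
      rintro n k y ⟨x, hx, rfl⟩
      refine ⟨?_, fun g => ?_⟩
      · rw [smul_smul, ← pow_add]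
        exact hx.1
      · rw [smul_comm, hx.2]
    have hSnmono : ∀ n k, Sn n (k + 1) ⊆ Sn n k := by
      rintro n k y ⟨x, hx, rfl⟩
      refine ⟨p • x, ⟨?_, fun g => ?_⟩, ?_⟩
      · rw [smul_smul, ← pow_succ]
        exact hx.1
      · rw [smul_comm, hx.2]
      · show p ^ k • (p • x) = p ^ (k + 1) • x
        rw [smul_smul, ← pow_succ]
    have hSanti : ∀ n {k1 k2 : ℕ}, k1 ≤ k2 → Sn n k2 ⊆ Sn n k1 := by
      intro n k1 k2 h
      induction h with
      | refl => exact subset_rfl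
      | step _ ih => exact (hSnmono n _).trans ih
    have hSnfin : ∀ n k, (Sn n k).Finite := fun n k => (hKfin _).image _
    -- the eventual image at level 1 contains a nonzero element
    have hS1 : ∀ k, (Sn 1 k \ {0}).Nonempty := by
      intro k
      obtain ⟨x, hx1, hx2, hx3⟩ := hub k
      set e := Nat.find hx1 with he
      have he0 : p ^ e • x = 0 := Nat.find_spec hx1
      have hke : k < e := by
        by_contra hle
        push_neg at hle
        exact hx3 (by
          rw [show k = (k - e) + e by omega, pow_add, mul_smul, he0, smul_zero])
      have he1 : 1 ≤ e := by omega
      have hne : p ^ (e - 1) • x ≠ 0 := Nat.find_min hx1 (by omega)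
      refine ⟨p ^ (e - 1) • x,
        Set.diff_subset_diff_left (hSanti 1 (show k ≤ e - 1 by omega)) ?_⟩
      refine ⟨⟨x, ⟨?_, hx2⟩, rfl⟩, by simpa using hne⟩
      rw [show 1 + (e - 1) = e by omega]
      exact he0
    obtain ⟨a, ha⟩ := chain_ne (fun k => Sn 1 k \ {0}) (fun k => (hSnfin 1 k).diff (t := {0}))
      hS1 (fun k => Set.diff_subset_diff_left (hSnmono 1 k))
    have haT : a ∈ ⋂ k, Sn 1 k := Set.mem_iInter.2 fun k =>
      ((Set.mem_iInter.1 ha k).1)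
    have ha0 : a ≠ 0 := by
      have := (Set.mem_iInter.1 ha 0).2
      simpa using this
    set T : ℕ → Set M := fun n => ⋂ k, Sn n k with hTdef
    have hTK : ∀ n, T n ⊆ K n := by
      intro n x hx
      have := Set.mem_iInter.1 hx 0
      exact hSnK n 0 this
    -- surjectivity of p : T (n+1) → T n
    have step : ∀ n (x : M), x ∈ T n → ∃ y, y ∈ T (n + 1) ∧ p • y = x := by
      intro n x hx
      set F : ℕ → Set M := fun k => {b ∈ Sn (n + 1) k | p • b = x} with hF
      have hFfin : ∀ k, (F k).Finite := fun k => (hSnfin (n + 1) k).subset fun b hb => hb.1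
      have hFne : ∀ k, (F k).Nonempty := by
        intro k
        have hxk := Set.mem_iInter.1 hx (k + 1)
        obtain ⟨z, hz, hzx⟩ := hxk
        refine ⟨p ^ k • z, ⟨⟨z, ?_, rfl⟩, ?_⟩⟩
        · rw [show n + 1 + k = n + (k + 1) by omega]
          exact hz
        · rw [smul_smul, ← pow_succ', ← hzx]
      have hFmono : ∀ k, F (k + 1) ⊆ F k := fun k b hb =>
        ⟨hSnmono (n + 1) k hb.1, hb.2⟩
      obtain ⟨b, hb⟩ := chain_ne F hFfin hFne hFmono
      refine ⟨b, Set.mem_iInter.2 fun k => (Set.mem_iInter.1 hb k).1,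
        (Set.mem_iInter.1 hb 0).2⟩
    choose st hst1 hst2 using step
    let Fs : (n : ℕ) → {x : M // x ∈ T (n + 1)} :=
      fun n => Nat.rec ⟨a, haT⟩
        (fun m prev => ⟨st (m + 1) prev.1 prev.2, hst1 (m + 1) prev.1 prev.2⟩) n
    have hFs : ∀ m, p • (Fs (m + 1)).1 = (Fs m).1 :=
      fun m => hst2 (m + 1) (Fs m).1 (Fs m).2
    have hFsK : ∀ n, (Fs n).1 ∈ K (n + 1) := fun n => hTK (n + 1) (Fs n).2
    have hzero := hT (fun n => Nat.casesOn n 0 (fun m => (Fs m).1)) ?_ ?_ ?_ 1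
    · exact ha0 hzero
    · intro n
      cases n with
      | zero => simp
      | succ m => exact (hFsK m).1
    · intro n
      cases n with
      | zero =>
        show p • (Fs 0).1 = 0
        have := (hFsK 0).1
        rwa [pow_one] at this
      | succ m => exact hFs m
    · intro g n
      cases n with
      | zero => exact smul_zero g
      | succ m => exact (hFsK m).2 g
end

section
/- Let $p \ge 3$, and let $\chi_1, \chi_2 : \widehat{\mathbb{Z}} \to \mathbb{Z}_p^\times$ be continuous characters with $\chi_i(1) = (m_i, n_i) \in \mathbb{Z}/(p-1)\mathbb{Z} \times \mathbb{Z}_p$, where $n_1, n_2 \ne 0$. Then $\ker(\chi_2) \subseteq \ker(\chi_1)$ if and only if the subgroup of $\mathbb{Z}/(p-1)\mathbb{Z}$ generated by $m_1$ is contained in the subgroup generated by $m_2$. -/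
instance (q : Nat.Primes) : Fact (q : ℕ).Prime := ⟨q.2⟩

/-- `Ẑ = ∏_ℓ ℤ_ℓ`. -/
def ZHat : Type := Π q : Nat.Primes, ℤ_[(q : ℕ)]

noncomputable instance : CommRing ZHat := by unfold ZHat; infer_instance
noncomputable instance : TopologicalSpace ZHat := by unfold ZHat; infer_instance

/-!
A continuous additive map out of `Ẑ` is determined by its value at `1`, because `ℕ` is dense in
`Ẑ` (approximate `p`-adically in each of finitely many coordinates and glue by the Chinese
remainder theorem). Hence the `ℤ_p`-component of a character is `x ↦ x_p · n`, while its
`ℤ/(p-1)`-component kills the factor `ℤ_p` of `Ẑ`, on which `p - 1` is invertible. Evaluating on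
`k • (1 - e_p)`, with `e_p` the idempotent of that factor, shows that `ker χ₂ ⊆ ker χ₁` forces
every `k` killing `m₂` to kill `m₁`, which in the cyclic group `ℤ/(p-1)` means `m₁ ∈ ⟨m₂⟩`.
Conversely `m₁ = t m₂` gives `fst ∘ χ₁ = t • fst ∘ χ₂`, and `n₂ ≠ 0` makes `χ₂ x = 0` force
`x_p = 0`.
-/

open Topology

theorem mem_zmultiples_of_addOrderOf_dvd {G : Type*} [AddCommGroup G] [IsAddCyclic G] [Finite G]
    {a b : G} (h : addOrderOf a ∣ addOrderOf b) : a ∈ AddSubgroup.zmultiples b := by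
  have hle : AddSubgroup.zmultiples b ≤ (nsmulAddMonoidHom (addOrderOf b) : G →+ G).ker :=
    AddSubgroup.zmultiples_le.mpr (addOrderOf_nsmul_eq_zero b)
  have hcard : Nat.card (nsmulAddMonoidHom (addOrderOf b) : G →+ G).ker ≤
      Nat.card (AddSubgroup.zmultiples b) := by
    rw [IsAddCyclic.card_nsmulAddMonoidHom_ker, Nat.card_zmultiples,
      Nat.gcd_eq_right (addOrderOf_dvd_natCard b)]
  rw [AddSubgroup.eq_of_le_of_card_ge hle hcard]
  exact addOrderOf_dvd_iff_nsmul_eq_zero.mp h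

theorem DenseRange.addMonoidHom_ext_of_map_one {R M : Type*} [AddMonoidWithOne R]
    [TopologicalSpace R] [AddMonoid M] [TopologicalSpace M] [T2Space M]
    (hR : DenseRange (Nat.cast : ℕ → R)) {f g : R →+ M} (hf : Continuous f) (hg : Continuous g)
    (h : f 1 = g 1) : f = g :=
  DFunLike.coe_injective <| hR.equalizer hf hg <| funext fun k => by
    simp only [Function.comp_apply, ← nsmul_one, map_nsmul, h]

theorem Nat.Primes.exists_modEq_pow (S : Finset Nat.Primes) (n a : Nat.Primes → ℕ) :
    ∃ k : ℕ, ∀ q ∈ S, k ≡ a q [MOD (q : ℕ) ^ n q] :=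
  ⟨_, (Nat.chineseRemainderOfFinset a (fun q => (q : ℕ) ^ n q) S
    (fun q _ => pow_ne_zero _ q.2.ne_zero)
    (fun q _ r _ hqr => Nat.Coprime.pow _ _
      ((Nat.coprime_primes q.2 r.2).mpr fun h => hqr (Subtype.ext h)))).2⟩

namespace PadicInt

variable {p : ℕ} [hp : Fact p.Prime]

theorem exists_natCast_mem_of_modEq_appr {x : ℤ_[p]} {U : Set ℤ_[p]} (hU : U ∈ 𝓝 x) :
    ∃ n : ℕ, ∀ k : ℕ, k ≡ x.appr n [MOD p ^ n] → (k : ℤ_[p]) ∈ U := by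
  obtain ⟨ε, hε, hball⟩ := Metric.mem_nhds_iff.mp hU
  have hp_lt_one : ‖(p : ℤ_[p])‖ < 1 := by
    rw [norm_p]
    exact inv_lt_one_of_one_lt₀ (by exact_mod_cast hp.out.one_lt)
  obtain ⟨n, hn⟩ := (NormedAddGroup.tendsto_nhds_zero.mp
    (tendsto_pow_atTop_nhds_zero_of_norm_lt_one hp_lt_one) ε hε).exists
  refine ⟨n, fun k hk => hball ?_⟩
  have hx : (p : ℤ_[p]) ^ n ∣ x - x.appr n := Ideal.mem_span_singleton.mp (appr_spec n x)
  have hk : (p : ℤ_[p]) ^ n ∣ (x.appr n : ℤ_[p]) - k := by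
    simpa using (Int.castRingHom ℤ_[p]).map_dvd (Nat.modEq_iff_dvd.mp hk)
  obtain ⟨c, hc⟩ := dvd_add hx hk
  rw [Metric.mem_ball, dist_comm, dist_eq_norm, ← sub_add_sub_cancel, hc, norm_mul]
  exact (mul_le_of_le_one_right (norm_nonneg _) (norm_le_one c)).trans_lt hn

theorem addMonoidHom_eq_zero_of_nsmul_eq_zero {A : Type*} [AddMonoid A] {n : ℕ} (hn : p.Coprime n)
    (hA : ∀ a : A, n • a = 0) (f : ℤ_[p] →+ A) : f = 0 := by
  have hu : IsUnit (n : ℤ_[p]) := isUnit_iff.mpr (norm_natCast_eq_one_iff.mpr hn)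
  ext x
  obtain ⟨y, rfl⟩ : ∃ y, x = n • y :=
    ⟨hu.unit⁻¹ * x, by rw [nsmul_eq_mul, ← mul_assoc, IsUnit.mul_val_inv, one_mul]⟩
  rw [map_nsmul, hA, AddMonoidHom.zero_apply]

end PadicInt

namespace ZHat

theorem denseRange_natCast : DenseRange (Nat.cast : ℕ → ZHat) := by
  show DenseRange (Nat.cast : ℕ → Π q : Nat.Primes, ℤ_[(q : ℕ)])
  intro x
  rw [mem_closure_iff_nhds]
  intro U hU
  rw [nhds_pi, Filter.mem_pi] at hU
  obtain ⟨I, hI, t, ht, htU⟩ := hU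
  choose n hn using fun q => PadicInt.exists_natCast_mem_of_modEq_appr (ht q)
  obtain ⟨k, hk⟩ := Nat.Primes.exists_modEq_pow hI.toFinset n fun q => (x q).appr (n q)
  exact ⟨k, htU fun q hq => hn q k (hk q (hI.mem_toFinset.mpr hq)), k, rfl⟩

variable {p : Nat.Primes}

theorem map_eq_mul_map_one {ψ : ZHat →+ ℤ_[(p : ℕ)]} (hψ : Continuous ψ) (x : ZHat) :
    ψ x = x p * ψ 1 := by
  let eval : ZHat →+ ℤ_[(p : ℕ)] := (AddMonoidHom.mulRight (ψ 1)).comp (Pi.evalAddMonoidHom _ p)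
  have : ψ = eval := denseRange_natCast.addMonoidHom_ext_of_map_one hψ
    ((continuous_apply p).mul continuous_const) (one_mul _).symm
  exact DFunLike.congr_fun this x

noncomputable def single (p : Nat.Primes) : ℤ_[(p : ℕ)] →+ ZHat :=
  AddMonoidHom.single (fun q : Nat.Primes => ℤ_[(q : ℕ)]) p

@[simp]
theorem single_apply_self (y : ℤ_[(p : ℕ)]) : single p y p = y :=
  Pi.single_eq_same (M := fun q : Nat.Primes => ℤ_[(q : ℕ)]) p y

theorem map_single_eq_zero {A : Type*} [AddMonoid A] {n : ℕ} (hn : (p : ℕ).Coprime n)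
    (hA : ∀ a : A, n • a = 0) (f : ZHat →+ A) (y : ℤ_[(p : ℕ)]) : f (single p y) = 0 :=
  DFunLike.congr_fun (PadicInt.addMonoidHom_eq_zero_of_nsmul_eq_zero hn hA (f.comp (single p))) y

variable {χ χ' : ZHat →+ ZMod (p - 1) × ℤ_[(p : ℕ)]}

theorem snd_map_eq_mul (hχ : Continuous χ) (x : ZHat) : (χ x).2 = x p * (χ 1).2 :=
  map_eq_mul_map_one (ψ := (AddMonoidHom.snd _ _).comp χ) (continuous_snd.comp hχ) x

theorem map_single_one (hχ : Continuous χ) : χ (single p 1) = (0, (χ 1).2) := by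
  refine Prod.ext ?_ ?_
  · refine map_single_eq_zero
      ((Nat.coprime_self_sub_right p.2.one_lt.le).mpr (Nat.coprime_one_right _)) (fun a => ?_)
      ((AddMonoidHom.fst _ _).comp χ) 1
    rw [nsmul_eq_mul, ZMod.natCast_self, zero_mul]
  · rw [snd_map_eq_mul hχ, single_apply_self, one_mul]

theorem map_nsmul_one_sub_single (hχ : Continuous χ) (n : ℕ) :
    χ (n • (1 - single p 1)) = (n • (χ 1).1, 0) := by
  rw [map_nsmul, map_sub, map_single_one hχ]
  ext <;> simp

theorem fst_map_eq_zsmul (hχ : Continuous χ) (hχ' : Continuous χ') {t : ℤ}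
    (h : (χ 1).1 = t • (χ' 1).1) (x : ZHat) : (χ x).1 = t • (χ' x).1 :=
  DFunLike.congr_fun
    (f := (AddMonoidHom.fst _ _).comp χ) (g := t • (AddMonoidHom.fst _ _).comp χ')
    (denseRange_natCast.addMonoidHom_ext_of_map_one (continuous_fst.comp hχ)
      ((continuous_fst.comp hχ').const_smul t) h) x

theorem ker_le_ker_iff (hχ : Continuous χ) (hχ' : Continuous χ') (hn : (χ' 1).2 ≠ 0) :
    χ'.ker ≤ χ.ker ↔
      AddSubgroup.zmultiples (χ 1).1 ≤ AddSubgroup.zmultiples (χ' 1).1 := by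
  have : NeZero ((p : ℕ) - 1) := ⟨Nat.sub_ne_zero_of_lt p.2.one_lt⟩
  constructor
  · intro hker
    rw [AddSubgroup.zmultiples_le]
    refine mem_zmultiples_of_addOrderOf_dvd (addOrderOf_dvd_of_nsmul_eq_zero ?_)
    have h : addOrderOf (χ' 1).1 • (1 - single p 1) ∈ χ.ker := hker <| by
      rw [AddMonoidHom.mem_ker, map_nsmul_one_sub_single hχ', addOrderOf_nsmul_eq_zero]
      rfl
    rw [AddMonoidHom.mem_ker, map_nsmul_one_sub_single hχ] at h
    exact congrArg Prod.fst h
  · intro hle x hx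
    rw [AddMonoidHom.mem_ker] at hx ⊢
    obtain ⟨t, ht⟩ := AddSubgroup.mem_zmultiples_iff.mp (hle (AddSubgroup.mem_zmultiples _))
    have hxp : x p = 0 := by
      have h := congrArg Prod.snd hx
      rw [snd_map_eq_mul hχ'] at h
      exact (mul_eq_zero.mp h).resolve_right hn
    refine Prod.ext ?_ ?_
    · rw [fst_map_eq_zsmul hχ hχ' ht.symm x, hx]
      exact smul_zero t
    · rw [snd_map_eq_mul hχ, hxp, zero_mul]
      rfl

end ZHat

theorem stmt_4_general (p : ℕ) [hp : Fact p.Prime]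
    (χ₁ χ₂ : ZHat →+ ZMod (p - 1) × ℤ_[p]) (hχ₁ : Continuous χ₁) (hχ₂ : Continuous χ₂)
    (m₁ m₂ : ZMod (p - 1)) (n₁ n₂ : ℤ_[p]) (hn₂ : n₂ ≠ 0)
    (hval₁ : χ₁ 1 = (m₁, n₁)) (hval₂ : χ₂ 1 = (m₂, n₂)) :
    (∀ x : ZHat, χ₂ x = 0 → χ₁ x = 0) ↔
      AddSubgroup.zmultiples m₁ ≤ AddSubgroup.zmultiples m₂ := by
  -- with `p : Nat.Primes`, `ℤ_[p]` is syntactically a factor of `ZHat`, as the lemmas above need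
  obtain ⟨p, rfl⟩ : ∃ q : Nat.Primes, (q : ℕ) = p := ⟨⟨p, hp.out⟩, rfl⟩
  have h := ZHat.ker_le_ker_iff hχ₁ hχ₂ (by rw [hval₂]; exact hn₂)
  rwa [hval₁, hval₂] at h

/-- For `p ≥ 3` and continuous characters `χᵢ : Ẑ → ℤ/(p-1) × ℤ_p` (the target being
`ℤ_pˣ` under the canonical isomorphism) with `χᵢ(1) = (mᵢ, nᵢ)`, `nᵢ ≠ 0`, one has
`ker χ₂ ⊆ ker χ₁` iff `⟨m₁⟩ ⊆ ⟨m₂⟩` in `ℤ/(p-1)`. -/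
theorem stmt_4 (p : ℕ) [hp : Fact p.Prime] (hp3 : 3 ≤ p)
    (χ₁ χ₂ : ZHat →+ ZMod (p - 1) × ℤ_[p]) (hχ₁ : Continuous χ₁) (hχ₂ : Continuous χ₂)
    (m₁ m₂ : ZMod (p - 1)) (n₁ n₂ : ℤ_[p]) (hn₁ : n₁ ≠ 0) (hn₂ : n₂ ≠ 0)
    (hval₁ : χ₁ 1 = (m₁, n₁)) (hval₂ : χ₂ 1 = (m₂, n₂)) :
    (∀ x : ZHat, χ₂ x = 0 → χ₁ x = 0) ↔
      AddSubgroup.zmultiples m₁ ≤ AddSubgroup.zmultiples m₂ :=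
  stmt_4_general p (hp := hp) χ₁ χ₂ hχ₁ hχ₂ m₁ m₂ n₁ n₂ hn₂ hval₁ hval₂
end

section
/- Suppose $F_1 = \mathbb{Q}_p(\alpha_1)$ and $F_2$ are distinct quadratic extensions of $\mathbb{Q}_p$ contained in a finite extension $K$ of $\mathbb{Q}_p$, with $\alpha_1^2 \in \mathbb{Z}_p$. Then the kernel of the norm map $\mathrm{Nr}_{K/F_1} : K^\times \to F_1^\times$ is not contained in the kernel of $\mathrm{Nr}_{K/F_2}$, and vice versa. Equivalently: $\ker(\mathrm{Nr}_{K/F_1}) \subseteq \ker(\mathrm{Nr}_{K/F_2})$ if and only if $F_1 = F_2$. -/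
open Polynomial IntermediateField


/-- In a quadratic extension of a char-0 field, there is a "square root" generator. -/
lemma aux_exists_sqrt {E F : Type*} [Field E] [CharZero E] [Field F] [Algebra E F]
    [FiniteDimensional E F] (h2 : Module.finrank E F = 2) :
    ∃ β : F, β ∉ (algebraMap E F).range ∧ ∃ d : E, β ^ 2 = algebraMap E F d := by
  haveI : CharZero F := charZero_of_injective_algebraMap (algebraMap E F).injective
  -- find an element outside the base field
  obtain ⟨γ, hγ⟩ : ∃ γ : F, γ ∉ (algebraMap E F).range := by
    by_contra h
    push_neg at h
    have hbt : (⊥ : Subalgebra E F) = ⊤ := by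
      rw [eq_top_iff]
      intro y _
      rcases h y with ⟨u, rfl⟩
      exact ⟨u, rfl⟩
    rw [Subalgebra.bot_eq_top_iff_finrank_eq_one] at hbt
    omega
  have hint : IsIntegral E γ := IsIntegral.of_finite E γ
  have hdeg : (minpoly E γ).natDegree = 2 := by
    have hle := minpoly.natDegree_le (A := E) γ
    rw [h2] at hle
    have hge := (minpoly.two_le_natDegree_iff hint).2 hγ
    omega
  have h0 := minpoly.aeval E γ
  rw [Polynomial.aeval_eq_sum_range, hdeg] at h0
  simp only [Finset.sum_range_succ, Finset.sum_range_zero, zero_add, pow_zero, pow_one] at h0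
  have hc2 : (minpoly E γ).coeff 2 = 1 := by
    have := (minpoly.monic hint).leadingCoeff
    rwa [Polynomial.leadingCoeff, hdeg] at this
  rw [hc2, one_smul] at h0
  set b := (minpoly E γ).coeff 1 with hb
  set c := (minpoly E γ).coeff 0 with hc
  rw [Algebra.smul_def, Algebra.smul_def, mul_one] at h0
  refine ⟨2 * γ + algebraMap E F b, ?_, b ^ 2 - 4 * c, ?_⟩
  · rintro ⟨u, hu⟩
    apply hγ
    refine ⟨(u - b) / 2, ?_⟩
    have h2ne : (2 : F) ≠ 0 := two_ne_zero
    field_simp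
    rw [map_div₀, map_sub, map_ofNat, div_eq_iff h2ne]
    linear_combination hu
  · rw [map_sub, map_pow, map_mul, map_ofNat]
    linear_combination (4 : F) * h0

/-- In a quadratic extension, there is an element of "norm one" (root of a monic quadratic
with constant term 1 over the base) outside the base whose `n`-th power is not 1. -/
lemma aux_exists_normone {E F : Type*} [Field E] [CharZero E] [Field F] [Algebra E F]
    [FiniteDimensional E F] (h2 : Module.finrank E F = 2) (n : ℕ) (hn : 0 < n) :
    ∃ x : F, x ∉ (algebraMap E F).range ∧
      (∃ s : E, x ^ 2 - algebraMap E F s * x + 1 = 0) ∧ x ^ n ≠ 1 := by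
  haveI : CharZero F := charZero_of_injective_algebraMap (algebraMap E F).injective
  obtain ⟨β, hβ, d, hd⟩ := aux_exists_sqrt h2
  have hβ0 : β ≠ 0 := fun h => hβ ⟨0, by rw [map_zero, h]⟩
  set f : E → F := fun t => (β + algebraMap E F t) / (algebraMap E F t - β) with hf
  have hv : ∀ t : E, algebraMap E F t - β ≠ 0 := by
    intro t h
    exact hβ ⟨t, sub_eq_zero.mp h⟩
  have hinj : Function.Injective f := by
    intro t t' h
    rw [hf] at h
    rw [div_eq_div_iff (hv t) (hv t')] at h
    have h2β : (2 * β) * (algebraMap E F t' - algebraMap E F t) = 0 := by linear_combination h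
    rcases mul_eq_zero.mp h2β with h' | h'
    · exact absurd h' (mul_ne_zero two_ne_zero hβ0)
    · exact ((algebraMap E F).injective (sub_eq_zero.mp h')).symm
  -- all but finitely many t work
  have hroots : Set.Finite {y : F | y ^ n = 1} := by
    have : {y : F | y ^ n = 1} ⊆ {y : F | (X ^ n - 1 : F[X]).IsRoot y} := by
      intro y hy
      simp only [Set.mem_setOf_eq, IsRoot, eval_sub, eval_pow, eval_X, eval_one, sub_eq_zero, hy]
    exact Set.Finite.subset (Polynomial.finite_setOf_isRoot (X_pow_sub_C_ne_zero hn 1)) this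
  have hbad : Set.Finite ({t : E | f t ^ n = 1} ∪ {0}) := by
    refine Set.Finite.union ?_ (Set.finite_singleton 0)
    have : {t : E | f t ^ n = 1} ⊆ f ⁻¹' {y : F | y ^ n = 1} := fun t ht => ht
    exact Set.Finite.subset (Set.Finite.preimage hinj.injOn hroots) this
  obtain ⟨t, ht⟩ := hbad.infinite_compl.nonempty
  simp only [Set.mem_compl_iff, Set.mem_union, Set.mem_setOf_eq, Set.mem_singleton_iff,
    not_or] at ht
  obtain ⟨htn, ht0⟩ := ht
  have ht2 : t ^ 2 - d ≠ 0 := by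
    intro h
    have : (algebraMap E F t - β) * (algebraMap E F t + β) = 0 := by
      have : algebraMap E F (t ^ 2 - d) = 0 := by rw [h, map_zero]
      rw [map_sub, map_pow, ← hd] at this
      linear_combination this
    rcases mul_eq_zero.mp this with h' | h'
    · exact hv t h'
    · exact hβ ⟨-t, by rw [map_neg]; exact (eq_neg_of_add_eq_zero_right h').symm⟩
  refine ⟨f t, ?_, ⟨(2 * t ^ 2 + 2 * d) / (t ^ 2 - d), ?_⟩, htn⟩
  · -- f t not in base field
    rintro ⟨c, hc⟩
    rw [hf] at hc
    rw [eq_div_iff (hv t)] at hc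
    have key : β * (1 + algebraMap E F c) = algebraMap E F t * (algebraMap E F c - 1) := by
      linear_combination -hc
    by_cases h1c : (1 : E) + c = 0
    · have hc1 : algebraMap E F c = -1 := by
        have := congrArg (algebraMap E F) h1c
        rw [map_add, map_one, map_zero] at this
        exact eq_neg_of_add_eq_zero_right this
      rw [hc1] at key
      have : algebraMap E F t * (2 : F) = 0 := by linear_combination key
      rcases mul_eq_zero.mp this with h' | h'
      · exact ht0 ((algebraMap E F).injective (by rw [h', map_zero]))
      · exact two_ne_zero h'
    · apply hβ
      have h1cF : (1 : F) + algebraMap E F c ≠ 0 := by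
        intro h
        exact h1c ((algebraMap E F).injective (by rw [map_add, map_one, map_zero]; exact h))
      refine ⟨t * (c - 1) / (1 + c), ?_⟩
      simp only [map_div₀, map_mul, map_sub, map_add, map_one]
      rw [div_eq_iff h1cF]
      linear_combination -key
  · -- the quadratic relation
    have hu : β + algebraMap E F t ≠ 0 := by
      intro h
      exact hβ ⟨-t, by rw [map_neg]; exact (eq_neg_of_add_eq_zero_left h).symm⟩
    have hts : algebraMap E F (t ^ 2 - d) ≠ 0 := by
      intro h
      exact ht2 ((algebraMap E F).injective (by rw [map_zero]; exact h))
    have hst : algebraMap E F ((2 * t ^ 2 + 2 * d) / (t ^ 2 - d))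
        = (β + algebraMap E F t) / (algebraMap E F t - β)
          + (algebraMap E F t - β) / (β + algebraMap E F t) := by
      rw [map_div₀, div_add_div _ _ (hv t) hu,
        div_eq_div_iff hts (mul_ne_zero (hv t) hu)]
      simp only [map_add, map_mul, map_sub, map_pow, map_ofNat]
      linear_combination (-(4 : F) * (algebraMap E F t) ^ 2) * hd
    simp only [hf]
    rw [hst]
    have hx : ((algebraMap E F t - β) / (β + algebraMap E F t))
        * ((β + algebraMap E F t) / (algebraMap E F t - β)) = 1 := by
      rw [div_mul_div_comm, mul_comm, div_self (mul_ne_zero hu (hv t))]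
    linear_combination -hx

lemma aux_quad_monic {R : Type*} [CommRing R] [Nontrivial R] (b c : R) :
    (X ^ 2 + C b * X + C c : R[X]).Monic := by
  have h : ((C b * X + C c : R[X])).degree < (2 : ℕ) :=
    lt_of_le_of_lt degree_linear_le (by norm_num)
  rw [add_assoc]
  exact monic_X_pow_add h

lemma aux_quad_natDegree {R : Type*} [CommRing R] [Nontrivial R] (b c : R) :
    (X ^ 2 + C b * X + C c : R[X]).natDegree = 2 := by
  have h : ((C b * X + C c : R[X])).degree < (X ^ 2 : R[X]).degree := by
    rw [degree_X_pow]
    exact lt_of_le_of_lt degree_linear_le (by norm_num)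
  rw [add_assoc]
  have h2 := degree_add_eq_left_of_degree_lt h
  rw [degree_X_pow] at h2
  exact natDegree_eq_of_degree_eq_some h2

lemma aux_quad_coeff_zero {R : Type*} [CommRing R] (b c : R) :
    (X ^ 2 + C b * X + C c : R[X]).coeff 0 = c := by
  simp [coeff_X_pow]

set_option synthInstance.maxHeartbeats 1000000 in
set_option maxHeartbeats 1000000 in
/-- For quadratic subextensions `F₁, F₂` of a finite extension `K/ℚ_p`, the kernel of the
norm `Nr_{K/F₁}` is contained in the kernel of `Nr_{K/F₂}` iff `F₁ = F₂`. -/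
theorem stmt_7 (p : ℕ) [Fact p.Prime] (K : Type*) [Field K] [Algebra ℚ_[p] K]
    [FiniteDimensional ℚ_[p] K] (F₁ F₂ : IntermediateField ℚ_[p] K)
    (h₁ : Module.finrank ℚ_[p] F₁ = 2) (h₂ : Module.finrank ℚ_[p] F₂ = 2) :
    (∀ x : K, Algebra.norm F₁ x = 1 → Algebra.norm F₂ x = 1) ↔ F₁ = F₂ := by
  constructor
  · intro H
    by_contra hne
    haveI : CharZero K := charZero_of_injective_algebraMap (algebraMap ℚ_[p] K).injective
    haveI : FiniteDimensional (↥F₂) K := FiniteDimensional.right ℚ_[p] (↥F₂) K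
    haveI : FiniteDimensional (↥F₁) K := FiniteDimensional.right ℚ_[p] (↥F₁) K
    haveI : CharZero (↥F₁) := charZero_of_injective_algebraMap (algebraMap ℚ_[p] (↥F₁)).injective
    have hn : 0 < Module.finrank (↥F₂) K := Module.finrank_pos
    obtain ⟨x₂, hx₂r, ⟨s, hx₂q⟩, hx₂n⟩ := aux_exists_normone (E := ℚ_[p]) (F := ↥F₂) h₂ _ hn
    set x : K := algebraMap (↥F₂) K x₂ with hxdef
    have hxF₂ : x ∈ F₂ := by
      rw [hxdef, IntermediateField.algebraMap_apply]
      exact x₂.2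
    have hxr : x ∉ (algebraMap ℚ_[p] K).range := by
      rintro ⟨u, hu⟩
      refine hx₂r ⟨u, (algebraMap (↥F₂) K).injective ?_⟩
      rw [← IsScalarTower.algebraMap_apply]
      exact hu
    have hq : x ^ 2 - algebraMap ℚ_[p] K s * x + 1 = 0 := by
      have h := congrArg (algebraMap (↥F₂) K) hx₂q
      rw [map_add, map_sub, map_mul, map_pow, map_one, map_zero,
        ← IsScalarTower.algebraMap_apply] at h
      exact h
    have hint : IsIntegral ℚ_[p] x := IsIntegral.of_finite ℚ_[p] x
    -- the minimal polynomial of x over ℚ_[p] has degree 2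
    have haev : aeval x (X ^ 2 + C (-s) * X + C 1 : ℚ_[p][X]) = 0 := by
      simp only [map_add, map_mul, map_pow, aeval_X, aeval_C, map_neg, map_one]
      linear_combination hq
    have hmdeg : (minpoly ℚ_[p] x).natDegree = 2 := by
      have hle : (minpoly ℚ_[p] x).degree ≤ (X ^ 2 + C (-s) * X + C 1 : ℚ_[p][X]).degree :=
        minpoly.min ℚ_[p] x (aux_quad_monic _ _) haev
      have hle' : (minpoly ℚ_[p] x).natDegree ≤ 2 := by
        have := natDegree_le_natDegree hle
        rwa [aux_quad_natDegree] at this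
      have hge := (minpoly.two_le_natDegree_iff hint).2 hxr
      omega
    have hxF₁ : x ∉ F₁ := by
      intro hx1
      have hfr : Module.finrank ℚ_[p] ℚ_[p]⟮x⟯ = 2 := by
        rw [IntermediateField.adjoin.finrank hint, hmdeg]
      have e1 : ℚ_[p]⟮x⟯ = F₁ :=
        IntermediateField.eq_of_le_of_finrank_eq
          (IntermediateField.adjoin_simple_le_iff.2 hx1) (by rw [hfr, h₁])
      have e2 : ℚ_[p]⟮x⟯ = F₂ :=
        IntermediateField.eq_of_le_of_finrank_eq
          (IntermediateField.adjoin_simple_le_iff.2 hxF₂) (by rw [hfr, h₂])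
      exact hne (e1.symm.trans e2)
    -- the minimal polynomial of x over F₁
    have hint1 : IsIntegral (↥F₁) x := IsIntegral.of_finite (↥F₁) x
    have hxr1 : x ∉ (algebraMap (↥F₁) K).range := by
      rintro ⟨y, hy⟩
      apply hxF₁
      rw [← hy, IntermediateField.algebraMap_apply]
      exact y.2
    have haev1 : aeval x (X ^ 2 + C (algebraMap ℚ_[p] (↥F₁) (-s)) * X + C 1 : (↥F₁)[X]) = 0 := by
      simp only [map_add, map_mul, map_pow, aeval_X, aeval_C]
      rw [← IsScalarTower.algebraMap_apply ℚ_[p] (↥F₁) K, map_neg, map_one]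
      linear_combination hq
    have hmin1 : minpoly (↥F₁) x = X ^ 2 + C (algebraMap ℚ_[p] (↥F₁) (-s)) * X + C 1 := by
      refine (Polynomial.eq_of_monic_of_dvd_of_natDegree_le (minpoly.monic hint1)
        (aux_quad_monic _ _) (minpoly.dvd (↥F₁) x haev1) ?_).symm
      rw [aux_quad_natDegree]
      exact (minpoly.two_le_natDegree_iff hint1).2 hxr1
    -- the norm of x over F₁ is 1
    have hnorm1 : Algebra.norm (↥F₁) x = 1 := by
      rw [Algebra.norm_eq_norm_adjoin (↥F₁) x, ← IntermediateField.adjoin.powerBasis_gen hint1,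
        Algebra.PowerBasis.norm_gen_eq_coeff_zero_minpoly,
        IntermediateField.adjoin.powerBasis_gen hint1, IntermediateField.adjoin.powerBasis_dim,
        IntermediateField.minpoly_gen, hmin1, aux_quad_natDegree, aux_quad_coeff_zero]
      norm_num
    have hnorm2 := H x hnorm1
    rw [hxdef, Algebra.norm_algebraMap] at hnorm2
    exact hx₂n hnorm2
  · rintro rfl
    exact fun x h => h
end
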